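/- Every finite group G of even order admits a generating set S such that Player 1 has a winning strategy for RAV(G,S). -/

import Mathlib

namespace RelatorGames

variable {G : Type*} [Group G]

/-- The letters available in the relator games: elements of `S` and their inverses. -/
def letters (S : Set G) : Set G := S ∪ (fun g => g⁻¹) '' S

/-- Evaluate a history of moves (most recent letter first) to a group element:
the group element represented by the word built so far. -/
def eval (h : List G) : G := h.reverse.prod

/-- A move `m` is legal after history `h`: it is a letter of `S ∪ S⁻¹` and it is not
the inverse of the immediately preceding letter (no backtracking). -/
def LegalMove (S : Set G) (h : List G) (m : G) : Prop :=
  m ∈ letters S ∧ ∀ p ∈ h.head?, m ≠ p⁻¹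

/-- Appending `m` to the history `h` produces a word equal in `G` to some earlier
prefix of the word (equivalently, the walk in the Cayley graph revisits a vertex). -/
def ClosesCycle (h : List G) (m : G) : Prop :=
  ∃ t, t <:+ h ∧ eval t = eval (m :: h)

/-- A strategy: a choice of next letter given the history (most recent letter first). -/
abbrev Strategy (G : Type*) := List G → G

/-- The sequence of histories arising when the first player (moving at even steps)
uses `σ` and the second player (moving at odd steps) uses `τ`. -/
def hist (σ τ : Strategy G) : ℕ → List G
  | 0 => []
  | k + 1 =>
      (if k % 2 = 0 then σ (hist σ τ k) else τ (hist σ τ k)) :: hist σ τ k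

/-- The move made at step `k` in the play of `σ` against `τ`. -/
def moveAt (σ τ : Strategy G) (k : ℕ) : G :=
  if k % 2 = 0 then σ (hist σ τ k) else τ (hist σ τ k)

/-- Step `j` is uneventful: the move made is legal and does not close a cycle. -/
def Ok (S : Set G) (σ τ : Strategy G) (j : ℕ) : Prop :=
  LegalMove S (hist σ τ j) (moveAt σ τ j) ∧ ¬ ClosesCycle (hist σ τ j) (moveAt σ τ j)

/-- In the play of `σ` against `τ`, the player moving at steps congruent to `p` mod 2
wins the relator achievement game `REL(G,S)`: at the first eventful step, either it is
that player's turn and they legally close a cycle, or it is the opponent's turn and the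
opponent has made an illegal move (in particular, has no legal move). -/
def RelWins (S : Set G) (p : ℕ) (σ τ : Strategy G) : Prop :=
  ∃ k : ℕ, (∀ j < k, Ok S σ τ j) ∧
    ((k % 2 = p ∧ LegalMove S (hist σ τ k) (moveAt σ τ k) ∧
        ClosesCycle (hist σ τ k) (moveAt σ τ k)) ∨
      (k % 2 ≠ p ∧ ¬ LegalMove S (hist σ τ k) (moveAt σ τ k)))

/-- In the play of `σ` against `τ`, the player moving at steps congruent to `p` mod 2
wins the relator avoidance game `RAV(G,S)`: at the first eventful step it is the
opponent's turn, and the opponent either makes an illegal move (in particular, has no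
legal move) or closes a cycle. -/
def RavWins (S : Set G) (p : ℕ) (σ τ : Strategy G) : Prop :=
  ∃ k : ℕ, (∀ j < k, Ok S σ τ j) ∧ k % 2 ≠ p ∧
    (¬ LegalMove S (hist σ τ k) (moveAt σ τ k) ∨ ClosesCycle (hist σ τ k) (moveAt σ τ k))

/-- Player 1 has a winning strategy for `REL(G,S)`. -/
def FirstWinsREL (S : Set G) : Prop :=
  ∃ σ : Strategy G, ∀ τ : Strategy G, RelWins S 0 σ τ

/-- Player 2 has a winning strategy for `REL(G,S)`. -/
def SecondWinsREL (S : Set G) : Prop :=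
  ∃ τ : Strategy G, ∀ σ : Strategy G, RelWins S 1 σ τ

/-- Player 1 has a winning strategy for `RAV(G,S)`. -/
def FirstWinsRAV (S : Set G) : Prop :=
  ∃ σ : Strategy G, ∀ τ : Strategy G, RavWins S 0 σ τ

/-- Player 2 has a winning strategy for `RAV(G,S)`. -/
def SecondWinsRAV (S : Set G) : Prop :=
  ∃ τ : Strategy G, ∀ σ : Strategy G, RavWins S 1 σ τ

end RelatorGames

/-!
Player 1 fixes an involution `t ∈ S` and plays `t` on every turn. These moves are always legal,
since Player 2 may not answer `t` with `t⁻¹ = t`. They never close a cycle either: when Player 1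
moves from position `g`, every earlier position `h` has its partner `h t` (the position just
before or just after one of Player 1's earlier moves) among the earlier positions, so `g t = h`
would make `g = h t` a repeated position, while `g t ≠ g` as `t ≠ 1`. In a finite group some
move must eventually fail, so the first one to fail is Player 2's.
-/

namespace RelatorGames

variable {G : Type*} {σ τ : Strategy G}

theorem hist_succ (k : ℕ) : hist σ τ (k + 1) = moveAt σ τ k :: hist σ τ k := rfl

theorem hist_suffix_hist {i j : ℕ} (hij : i ≤ j) : hist σ τ i <:+ hist σ τ j := by
  induction hij with
  | refl => exact List.suffix_refl _
  | step _ ih => exact ih.trans (List.suffix_cons _ _)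

theorem exists_eq_hist_of_suffix {k : ℕ} {s : List G} (hs : s <:+ hist σ τ k) :
    ∃ i ≤ k, s = hist σ τ i := by
  induction k with
  | zero => exact ⟨0, le_rfl, List.suffix_nil.mp hs⟩
  | succ k ih =>
    rcases List.suffix_cons_iff.mp hs with h | h
    · exact ⟨k + 1, le_rfl, h⟩
    · obtain ⟨i, hi, rfl⟩ := ih h
      exact ⟨i, hi.trans k.le_succ, rfl⟩

theorem moveAt_const_of_even {t : G} {k : ℕ} (hk : k % 2 = 0) :
    moveAt (fun _ => t) τ k = t := by
  simp [moveAt, hk]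

variable [Group G] {S : Set G}

theorem eval_cons (m : G) (h : List G) : eval (m :: h) = eval h * m := by
  simp [eval]

theorem eval_hist_ne_of_lt {i j : ℕ} (hok : ∀ l < j, Ok S σ τ l) (hij : i < j) :
    eval (hist σ τ i) ≠ eval (hist σ τ j) := by
  obtain ⟨l, rfl⟩ := Nat.exists_eq_add_of_lt hij
  exact fun he => (hok (i + l) (by omega)).2 ⟨hist σ τ i, hist_suffix_hist (by omega), he⟩

theorem eval_hist_injOn {k : ℕ} (hok : ∀ j < k, Ok S σ τ j) :
    Set.InjOn (fun i => eval (hist σ τ i)) (Set.Iic k) := by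
  intro i hi j hj he
  by_contra hne
  rcases lt_or_gt_of_ne hne with h | h
  · exact eval_hist_ne_of_lt (fun l hl => hok l (hl.trans_le hj)) h he
  · exact eval_hist_ne_of_lt (fun l hl => hok l (hl.trans_le hi)) h he.symm

theorem exists_not_ok [Finite G] : ∃ k, ¬ Ok S σ τ k := by
  by_contra! hok
  exact not_injective_infinite_finite (fun i => eval (hist σ τ i))
    fun i j he => (eval_hist_injOn (k := max i j) fun l _ => hok l)
      (le_max_left i j) (le_max_right i j) he

theorem ravWins_of_ok [Finite G] {p : ℕ}
    (h : ∀ k, k % 2 = p → (∀ j < k, Ok S σ τ j) → Ok S σ τ k) : RavWins S p σ τ := by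
  classical
  have hex : ∃ k, ¬ Ok S σ τ k := exists_not_ok
  have hbefore : ∀ j < Nat.find hex, Ok S σ τ j := fun j hj => not_not.mp (Nat.find_min hex hj)
  refine ⟨Nat.find hex, hbefore, fun hp => Nat.find_spec hex (h _ hp hbefore), ?_⟩
  simpa only [Ok, not_and_or, not_not] using Nat.find_spec hex

section Involution

variable {t : G}

theorem eval_hist_const_succ_of_even {k : ℕ} (hk : k % 2 = 0) :
    eval (hist (fun _ => t) τ (k + 1)) = eval (hist (fun _ => t) τ k) * t := by
  rw [hist_succ, eval_cons, moveAt_const_of_even hk]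

theorem legalMove_const_of_even (ht : t ∈ letters S) (htinv : t⁻¹ = t) {k : ℕ}
    (hk : k % 2 = 0) (hok : ∀ j < k, Ok S (fun _ => t) τ j) :
    LegalMove S (hist (fun _ => t) τ k) t := by
  refine ⟨ht, fun p hp => ?_⟩
  rcases k with _ | _ | k
  · simp [hist] at hp
  · omega
  obtain rfl : p = moveAt (fun _ => t) τ (k + 1) := by simpa [hist_succ] using hp.symm
  have hnoback := (hok (k + 1) (by omega)).1.2 (moveAt (fun _ => t) τ k) rfl
  rw [moveAt_const_of_even (k := k) (by omega), htinv] at hnoback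
  exact fun h => hnoback ((inv_eq_iff_eq_inv.mpr h).symm.trans htinv)

theorem not_closesCycle_const_of_even (ht1 : t ≠ 1) (htt : t * t = 1) {k : ℕ}
    (hk : k % 2 = 0) (hok : ∀ j < k, Ok S (fun _ => t) τ j) :
    ¬ ClosesCycle (hist (fun _ => t) τ k) t := by
  rintro ⟨s, hs, hes⟩
  obtain ⟨i, hik, rfl⟩ := exists_eq_hist_of_suffix hs
  rw [eval_cons] at hes
  have hinj := eval_hist_injOn hok
  rcases hik.lt_or_eq with hik | rfl
  · rcases Nat.even_or_odd' i with ⟨m, rfl | rfl⟩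
    · have hstep := eval_hist_const_succ_of_even (t := t) (τ := τ) (k := 2 * m) (by omega)
      rw [hes, mul_assoc, htt, mul_one] at hstep
      have := hinj (show 2 * m + 1 ≤ k by omega) Set.self_mem_Iic hstep
      omega
    · have hstep := eval_hist_const_succ_of_even (t := t) (τ := τ) (k := 2 * m) (by omega)
      rw [hes] at hstep
      have := hinj (show 2 * m ≤ k by omega) Set.self_mem_Iic (mul_right_cancel hstep).symm
      omega
  · exact ht1 (left_eq_mul.mp hes)

theorem firstWinsRAV_of_orderOf_eq_two [Finite G] (ht : t ∈ letters S) (hord : orderOf t = 2) :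
    FirstWinsRAV S := by
  obtain ⟨htt, ht1⟩ := orderOf_eq_prime_iff.mp hord
  rw [sq] at htt
  refine ⟨fun _ => t, fun τ => ravWins_of_ok fun k hk hok => ?_⟩
  rw [Ok, moveAt_const_of_even hk]
  exact ⟨legalMove_const_of_even ht (inv_eq_of_mul_eq_one_right htt) hk hok,
    not_closesCycle_const_of_even ht1 htt hk hok⟩

end Involution

end RelatorGames

open RelatorGames in
/-- Every finite group of even order admits a generating set `S`
(not containing the identity) for which Player 1 wins `RAV(G,S)`. -/
theorem rav_even_order_exists_generating_set {G : Type*} [Group G] [Fintype G]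
    (heven : Even (Fintype.card G)) :
    ∃ S : Set G, Subgroup.closure S = ⊤ ∧ (1 : G) ∉ S ∧ FirstWinsRAV S := by
  obtain ⟨t, ht⟩ := exists_prime_orderOf_dvd_card 2 heven.two_dvd
  have ht1 : t ≠ 1 := (orderOf_eq_prime_iff.mp ht).2
  refine ⟨Set.univ \ {1}, by rw [Subgroup.closure_sdiff_one, Subgroup.closure_univ],
    fun h => h.2 rfl, firstWinsRAV_of_orderOf_eq_two (Or.inl ⟨trivial, ht1⟩) ht⟩
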